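/- Let q ≥ 2, n ≥ 2, a ∈ ℤ_n, b ∈ ℤ_q, and let T_{a,b}(n;q) = {x ∈ ℤ_q^n : Syn(α(x)) ≡ a (mod n) and Σ_{i=1}^n x_i ≡ b (mod q)}, where α(x) is the signature of x. Then T_{a,b}(n;q) corrects a single deletion: for any two distinct codewords x, x̃ ∈ T_{a,b}(n;q), no sequence z ∈ ℤ_q^{n-1} can be obtained both from x by deleting one coordinate and from x̃ by deleting one coordinate. -/

import Mathlib

/-- VT syndrome of a sequence (1-indexed): `Syn(x) = ∑ i * x_i`. -/
def synL (l : List ℕ) : ℕ := ∑ i ∈ Finset.range l.length, (i + 1) * l.getD i 0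

/-- Signature of a `q`-ary sequence: binary vector of length `n-1` with
`α(x)_i = 1` iff `x_{i+1} ≥ x_i`. -/
def sigL (x : List ℕ) : List ℕ :=
  List.ofFn fun i : Fin (x.length - 1) =>
    if x.getD i.1 0 ≤ x.getD (i.1 + 1) 0 then 1 else 0

/-!
Deleting `x i` from `x` and `x' i'` from `x'` with the same result, say `i ≤ i'`, means
`x = p ++ u :: (s ++ r)` and `x' = p ++ (s ++ v :: r)`. The checksum forces `u = v`, and then
`x = x'` as soon as every letter of the block `s` equals `u`.

A deletion in `x` induces a deletion in its signature, so `α(x)` and `α(x')` are binary words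
of length `n - 1` with a common deletion and VT syndromes congruent modulo `n`; by the
Varshamov–Tenengolts argument they are equal. Finally, equal signatures force the comparisons
along the cyclic word `u, s, u` to be all `≤` or all `>`; the latter is absurd and the former
makes `s` constantly `u`.
-/

lemma List.cons_append_eq_append_cons_of_forall_eq {α : Type*} {u : α} {s : List α}
    (r : List α) (hs : ∀ c ∈ s, c = u) : u :: (s ++ r) = s ++ u :: r := by
  induction s with
  | nil => rfl
  | cons c s ih =>
    simp only [List.mem_cons, forall_eq_or_imp] at hs
    rw [hs.1, List.cons_append, ih hs.2, List.cons_append]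

lemma List.forall_eq_one_of_length_le_sum {s : List ℕ} (hs : ∀ c ∈ s, c ≤ 1)
    (h : s.length ≤ s.sum) : ∀ c ∈ s, c = 1 := by
  induction s with
  | nil => simp
  | cons a s ih =>
    simp only [List.mem_cons, forall_eq_or_imp, List.length_cons, List.sum_cons] at hs h ⊢
    have hsum : s.sum ≤ s.length := by simpa using List.sum_le_card_nsmul s 1 hs.2
    exact ⟨by omega, ih hs.2 (by omega)⟩

lemma List.exists_append_cons_of_eraseIdx_eq_of_le {α : Type*} :
    ∀ {l l' : List α} {i i' : ℕ}, l.eraseIdx i = l'.eraseIdx i' → i < l.length →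
      i' < l'.length → i ≤ i' →
        ∃ p s r u v, l = p ++ u :: (s ++ r) ∧ l' = p ++ (s ++ v :: r)
  | u :: l, l', 0, i', h, _, hi', _ => by
    refine ⟨[], l'.take i', l'.drop (i' + 1), u, l'[i'], ?_, ?_⟩
    · simpa [List.eraseIdx_eq_take_drop_succ] using h
    · rw [List.nil_append, ← List.drop_eq_getElem_cons hi', List.take_append_drop]
  | a :: l, b :: l', i + 1, i' + 1, h, hi, hi', hii => by
    simp only [List.eraseIdx_cons_succ, List.cons.injEq] at h
    obtain ⟨p, s, r, u, v, rfl, rfl⟩ := List.exists_append_cons_of_eraseIdx_eq_of_le h.2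
      (by simpa using hi) (by simpa using hi') (by omega)
    exact ⟨a :: p, s, r, u, v, rfl, by rw [h.1]; rfl⟩
  | _ :: _, [], _ + 1, _, _, _, hi', _ => by simp at hi'
  | _ :: _, _ :: _, _ + 1, 0, _, _, _, hii => by omega

lemma List.exists_append_cons_of_eraseIdx_eq {α : Type*} {l l' : List α} {i i' : ℕ}
    (h : l.eraseIdx i = l'.eraseIdx i') (hi : i < l.length) (hi' : i' < l'.length) :
    ∃ p s r u v, (l = p ++ u :: (s ++ r) ∧ l' = p ++ (s ++ v :: r)) ∨
      (l' = p ++ u :: (s ++ r) ∧ l = p ++ (s ++ v :: r)) := by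
  rcases le_total i i' with hii | hii
  · obtain ⟨p, s, r, u, v, h⟩ := List.exists_append_cons_of_eraseIdx_eq_of_le h hi hi' hii
    exact ⟨p, s, r, u, v, .inl h⟩
  · obtain ⟨p, s, r, u, v, h⟩ := List.exists_append_cons_of_eraseIdx_eq_of_le h.symm hi' hi hii
    exact ⟨p, s, r, u, v, .inr h⟩

lemma List.sum_range_length_getD (l : List ℕ) :
    ∑ i ∈ Finset.range l.length, l.getD i 0 = l.sum := by
  induction l with
  | nil => rfl
  | cons a l ih =>
    simp only [List.length_cons, Finset.sum_range_succ', List.getD_cons_succ,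
      List.getD_cons_zero, ih, List.sum_cons, add_comm]

lemma synL_cons (a : ℕ) (l : List ℕ) : synL (a :: l) = synL l + (a :: l).sum := by
  simp only [synL, List.length_cons, Finset.sum_range_succ', List.getD_cons_succ,
    List.getD_cons_zero, List.sum_cons, ← List.sum_range_length_getD l, add_mul, one_mul,
    Finset.sum_add_distrib]
  ring

lemma synL_append (l m : List ℕ) :
    synL (l ++ m) = synL l + synL m + l.length * m.sum := by
  induction l with
  | nil => simp [synL]
  | cons a l ih =>
    simp only [List.cons_append, synL_cons, ih, List.sum_cons, List.sum_append,
      List.length_cons]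
    ring

/-- Moving a letter `u` across a block `s` changes the syndrome by
`(|p| + 1)(u - v) + Σ s - |s| v`, which is too small to vanish modulo `m` unless `u = v` and
`s` is constantly `u`. -/
lemma forall_eq_of_synL_modEq {p s r : List ℕ} {u v m : ℕ} (hu : u ≤ 1) (hv : v ≤ 1)
    (hs : ∀ c ∈ s, c ≤ 1) (hm : p.length + s.length + 1 < m)
    (h : synL (p ++ u :: (s ++ r)) ≡ synL (p ++ (s ++ v :: r)) [MOD m]) :
    u = v ∧ ∀ c ∈ s, c = u := by
  have hdvd : (m : ℤ) ∣ (p.length + 1) * ((u : ℤ) - v) + s.sum - s.length * v := by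
    convert Nat.modEq_iff_dvd.mp h.symm using 1
    simp only [synL_append, synL_cons, List.sum_cons, List.sum_append,
      Nat.cast_add, Nat.cast_mul]
    ring
  have hsum : s.sum ≤ s.length := by simpa using List.sum_le_card_nsmul s 1 hs
  have hzero : (p.length + 1) * ((u : ℤ) - v) + s.sum - s.length * v = 0 := by
    refine Int.eq_zero_of_abs_lt_dvd hdvd (abs_lt.mpr ?_)
    interval_cases u <;> interval_cases v <;> simp only [Nat.cast_zero, Nat.cast_one] <;>
      constructor <;> omega
  interval_cases u <;> interval_cases v <;> simp only [Nat.cast_zero, Nat.cast_one] at hzero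
  · exact ⟨rfl, List.sum_eq_zero_iff.mp (by omega)⟩
  · omega
  · omega
  · exact ⟨rfl, List.forall_eq_one_of_length_le_sum hs (by omega)⟩

/-- Levenshtein's theorem: Varshamov–Tenengolts codes correct a single deletion. -/
theorem eq_of_eraseIdx_eq_of_synL_modEq {y y' : List ℕ} {j j' : ℕ} (hy : ∀ c ∈ y, c ≤ 1)
    (hy' : ∀ c ∈ y', c ≤ 1) (hlen : y.length = y'.length)
    (hsyn : synL y ≡ synL y' [MOD y.length + 1]) (h : y.eraseIdx j = y'.eraseIdx j') :
    y = y' := by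
  have hlen' := congrArg List.length h
  rcases lt_or_ge j y.length with hj | hj <;> rcases lt_or_ge j' y'.length with hj' | hj'
  · obtain ⟨p, s, r, u, v, ⟨rfl, rfl⟩ | ⟨rfl, rfl⟩⟩ :=
      List.exists_append_cons_of_eraseIdx_eq h hj hj'
    · obtain ⟨rfl, hs⟩ := forall_eq_of_synL_modEq (hy u (by simp)) (hy' v (by simp))
        (fun c hc => hy c (by simp [hc])) (by simp) hsyn
      rw [List.cons_append_eq_append_cons_of_forall_eq r hs]
    · obtain ⟨rfl, hs⟩ := forall_eq_of_synL_modEq (hy' u (by simp)) (hy v (by simp))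
        (fun c hc => hy' c (by simp [hc])) (by simp) hsyn.symm
      rw [List.cons_append_eq_append_cons_of_forall_eq r hs]
  · rw [List.length_eraseIdx_of_lt hj, List.eraseIdx_of_length_le hj'] at hlen'; omega
  · rw [List.eraseIdx_of_length_le hj, List.length_eraseIdx_of_lt hj'] at hlen'; omega
  · rwa [List.eraseIdx_of_length_le hj, List.eraseIdx_of_length_le hj'] at h

@[simp] lemma sigL_nil : sigL [] = [] := rfl

@[simp] lemma sigL_singleton (a : ℕ) : sigL [a] = [] := rfl

@[simp] lemma sigL_cons_cons (a b : ℕ) (l : List ℕ) :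
    sigL (a :: b :: l) = (if a ≤ b then 1 else 0) :: sigL (b :: l) := by
  simp [sigL, List.ofFn_succ]

@[simp] lemma length_sigL (l : List ℕ) : (sigL l).length = l.length - 1 := by
  simp [sigL]

lemma le_one_of_mem_sigL {l : List ℕ} : ∀ c ∈ sigL l, c ≤ 1 := by
  simp only [sigL, List.mem_ofFn, forall_exists_index]
  rintro _ _ rfl
  split_ifs <;> omega

lemma tail_sigL_cons (a : ℕ) (l : List ℕ) : (sigL (a :: l)).tail = sigL l := by
  cases l <;> simp

lemma sigL_append_cancel_left {l l' : List ℕ} :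
    ∀ p : List ℕ, sigL (p ++ l) = sigL (p ++ l') → sigL l = sigL l'
  | [], h => h
  | a :: p, h => sigL_append_cancel_left p <| by
    simpa only [List.cons_append, tail_sigL_cons] using congrArg List.tail h

/-- Deleting the letter `b` from `a, b, c` merges the comparisons `a ? b` and `b ? c` into
`a ? c`, which agrees with one of them. -/
lemma exists_sigL_eraseIdx :
    ∀ (l : List ℕ) (i : ℕ), ∃ j, sigL (l.eraseIdx i) = (sigL l).eraseIdx j
  | [], _ => ⟨0, rfl⟩
  | a :: l, 0 => ⟨0, by simp [← tail_sigL_cons a l]⟩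
  | [_], _ + 1 => ⟨0, rfl⟩
  | [_, _], 1 => ⟨0, rfl⟩
  | a :: b :: c :: l, 1 => by
    by_cases h : (if a ≤ c then 1 else 0) = if a ≤ b then 1 else 0
    · exact ⟨1, by simp [h]⟩
    · refine ⟨0, ?_⟩
      simp only [List.eraseIdx_cons_succ, List.eraseIdx_cons_zero, sigL_cons_cons,
        List.cons.injEq, and_true]
      split_ifs at h ⊢ <;> omega
  | a :: b :: l, i + 2 => by
    obtain ⟨j, hj⟩ := exists_sigL_eraseIdx (b :: l) (i + 1)
    exact ⟨j + 1, by simpa using hj⟩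

lemma isChain_of_sigL_cons_append_eq {a v : ℕ} {r : List ℕ} : ∀ {s : List ℕ}, s ≠ [] →
    sigL (a :: (s ++ r)) = sigL (s ++ v :: r) →
      (a :: (s ++ [v])).IsChain (· ≤ ·) ∨ (a :: (s ++ [v])).IsChain (· > ·)
  | [c], _, h => by
    have hbit := congrArg List.head? h
    simp only [List.singleton_append, sigL_cons_cons, List.head?_cons, Option.some.injEq] at hbit
    simp only [List.singleton_append, List.isChain_cons_cons, List.isChain_singleton, and_true]
    split_ifs at hbit <;> omega
  | c :: d :: s, _, h => by
    simp only [List.cons_append, sigL_cons_cons, List.cons.injEq] at h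
    have ih := isChain_of_sigL_cons_append_eq (s := d :: s) (List.cons_ne_nil _ _)
      (by simpa only [List.cons_append, sigL_cons_cons] using h.2)
    simp only [List.cons_append, List.isChain_cons_cons] at ih ⊢
    have hbit := h.1
    rcases ih with ⟨hcd, hc⟩ | ⟨hcd, hc⟩
    · exact .inl ⟨by simpa [hcd] using hbit, hcd, hc⟩
    · exact .inr ⟨by simpa [not_le.mpr hcd] using hbit, hcd, hc⟩

lemma forall_eq_of_sigL_eq {p s r : List ℕ} {u : ℕ}
    (h : sigL (p ++ u :: (s ++ r)) = sigL (p ++ (s ++ u :: r))) : ∀ c ∈ s, c = u := by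
  rcases eq_or_ne s [] with rfl | hs
  · simp
  rcases isChain_of_sigL_cons_append_eq hs (sigL_append_cancel_left p h) with hc | hc <;>
    rw [List.isChain_iff_pairwise] at hc <;>
    simp only [List.pairwise_cons, List.pairwise_append, List.mem_append, List.mem_singleton] at hc
  · exact fun c hc' => le_antisymm (hc.2.2.2 c hc' u rfl) (hc.1 c (.inl hc'))
  · exact absurd (hc.1 u (.inr rfl)) (lt_irrefl u)

lemma eq_of_sum_modEq_of_sigL_eq {q u v : ℕ} {p s r : List ℕ} (hu : u < q) (hv : v < q)
    (hsum : (p ++ u :: (s ++ r)).sum ≡ (p ++ (s ++ v :: r)).sum [MOD q])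
    (hsig : sigL (p ++ u :: (s ++ r)) = sigL (p ++ (s ++ v :: r))) :
    p ++ u :: (s ++ r) = p ++ (s ++ v :: r) := by
  obtain rfl : u = v := by
    refine (Nat.ModEq.add_right_cancel' (p.sum + s.sum + r.sum) ?_).eq_of_lt_of_lt hu hv
    convert hsum using 1 <;> simp only [List.sum_append, List.sum_cons] <;> ring
  rw [List.cons_append_eq_append_cons_of_forall_eq r (forall_eq_of_sigL_eq hsig)]

theorem eq_of_eraseIdx_eq_of_sum_modEq_of_sigL_eq {q : ℕ} {x x' : List ℕ} {i i' : ℕ}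
    (hx : ∀ c ∈ x, c < q) (hx' : ∀ c ∈ x', c < q) (hsum : x.sum ≡ x'.sum [MOD q])
    (hsig : sigL x = sigL x') (h : x.eraseIdx i = x'.eraseIdx i') (hi : i < x.length)
    (hi' : i' < x'.length) : x = x' := by
  obtain ⟨p, s, r, u, v, ⟨rfl, rfl⟩ | ⟨rfl, rfl⟩⟩ :=
    List.exists_append_cons_of_eraseIdx_eq h hi hi'
  · exact eq_of_sum_modEq_of_sigL_eq (hx u (by simp)) (hx' v (by simp)) hsum hsig
  · exact (eq_of_sum_modEq_of_sigL_eq (hx' u (by simp)) (hx v (by simp)) hsum.symm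
      hsig.symm).symm

theorem stmt_3_general (q n a b : ℕ)
    (x x' : List ℕ)
    (hxlen : x.length = n) (hxq : ∀ c ∈ x, c < q)
    (hxsig : synL (sigL x) % n = a) (hxsum : x.sum % q = b)
    (hx'len : x'.length = n) (hx'q : ∀ c ∈ x', c < q)
    (hx'sig : synL (sigL x') % n = a) (hx'sum : x'.sum % q = b)
    (hne : x ≠ x') :
    ¬ ∃ z : List ℕ, (∃ i < n, z = x.eraseIdx i) ∧ (∃ i < n, z = x'.eraseIdx i) := by
  rintro ⟨_, ⟨i, hi, rfl⟩, i', hi', hz⟩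
  refine hne (eq_of_eraseIdx_eq_of_sum_modEq_of_sigL_eq hxq hx'q (hxsum.trans hx'sum.symm) ?_
    hz (hxlen ▸ hi) (hx'len ▸ hi'))
  obtain ⟨j, hj⟩ := exists_sigL_eraseIdx x i
  obtain ⟨j', hj'⟩ := exists_sigL_eraseIdx x' i'
  refine eq_of_eraseIdx_eq_of_synL_modEq le_one_of_mem_sigL le_one_of_mem_sigL
    (by simp [hxlen, hx'len]) ?_ (hj.symm.trans (hz ▸ hj'))
  rw [length_sigL, hxlen, Nat.sub_add_cancel (by omega)]
  exact hxsig.trans hx'sig.symm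

theorem stmt_3 (q n a b : ℕ) (hq : 2 ≤ q) (hn : 2 ≤ n) (ha : a < n) (hb : b < q)
    (x x' : List ℕ)
    (hxlen : x.length = n) (hxq : ∀ c ∈ x, c < q)
    (hxsig : synL (sigL x) % n = a) (hxsum : x.sum % q = b)
    (hx'len : x'.length = n) (hx'q : ∀ c ∈ x', c < q)
    (hx'sig : synL (sigL x') % n = a) (hx'sum : x'.sum % q = b)
    (hne : x ≠ x') :
    ¬ ∃ z : List ℕ, (∃ i < n, z = x.eraseIdx i) ∧ (∃ i < n, z = x'.eraseIdx i) :=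
  stmt_3_general q n a b x x' hxlen hxq hxsig hxsum hx'len hx'q hx'sig hx'sum hne
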